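/- arXiv:2411.04018 — 3 statements merged into one kernel-verified Lean document; each statement's English description precedes it below -/
import Mathlib

section
/- Let μ > 0, D ≥ 0, ζ ≥ 0, R > 0, and let φ : [0,∞) → [0,∞) be a differentiable (absolutely continuous) function satisfying φ′(t) ≤ −2μ·φ(t) − 2D·(R^ζ − φ(t)^{ζ/2})·ψ(t) for almost all t ≥ 0, where ψ(t) ≥ 0. If φ(0) ≤ R², then φ(t) ≤ e^{−2μt}·φ(0) for all t ≥ 0; in particular φ(t) ≤ R² for all t ≥ 0. -/
/-!
While `φ ≤ R²`, the factor `R^ζ - φ^(ζ/2)` is nonnegative, so the nonlinear term only helps and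
`φ' ≤ -2μφ`. In particular `φ' < 0` wherever `φ` touches the level `R²`, so `φ` can never cross it
(a fencing argument), and then Grönwall's inequality gives the exponential decay.
-/

open Real Set

theorem le_of_hasDerivAt_neg_of_eq {f f' : ℝ → ℝ} {a c : ℝ}
    (hf : ∀ t, a ≤ t → HasDerivAt f (f' t) t) (ha : f a ≤ c)
    (hc : ∀ t, a ≤ t → f t = c → f' t < 0) {t : ℝ} (ht : a ≤ t) : f t ≤ c :=
  image_le_of_deriv_right_lt_deriv_boundary (B := fun _ => c) (B' := 0)
    (fun s hs => (hf s hs.1).continuousAt.continuousWithinAt)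
    (fun s hs => (hf s hs.1).hasDerivWithinAt) ha (fun _ => hasDerivAt_const _ c)
    (fun s hs => hc s hs.1) ⟨ht, le_rfl⟩

theorem le_exp_mul_of_hasDerivAt_le_mul {f f' : ℝ → ℝ} {a K : ℝ}
    (hf : ∀ t, a ≤ t → HasDerivAt f (f' t) t) (hbound : ∀ t, a ≤ t → f' t ≤ K * f t)
    {t : ℝ} (ht : a ≤ t) : f t ≤ exp (K * (t - a)) * f a := by
  have := le_gronwallBound_of_liminf_deriv_right_le (ε := 0) (b := t)
    (fun s hs => (hf s hs.1).continuousAt.continuousWithinAt)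
    (fun s hs _ hr => (hf s hs.1).hasDerivWithinAt.liminf_right_slope_le hr) le_rfl
    (fun s hs => by simpa using hbound s hs.1) t ⟨ht, le_rfl⟩
  rwa [gronwallBound_ε0, mul_comm] at this

theorem rpow_half_le_rpow_of_le_sq {x R ζ : ℝ} (hx : 0 ≤ x) (hR : 0 ≤ R) (hζ : 0 ≤ ζ)
    (h : x ≤ R ^ 2) : x ^ (ζ / 2) ≤ R ^ ζ := by
  calc x ^ (ζ / 2) ≤ (R ^ 2) ^ (ζ / 2) := rpow_le_rpow hx h (by positivity)
    _ = R ^ ζ := by rw [← rpow_natCast_mul hR, Nat.cast_ofNat, mul_div_cancel₀ ζ two_ne_zero]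

theorem stmt2 (μ D ζ R : ℝ) (φ φ' ψ : ℝ → ℝ)
    (hμ : 0 < μ) (hD : 0 ≤ D) (hζ : 0 ≤ ζ) (hR : 0 < R)
    (hφpos : ∀ t : ℝ, 0 ≤ t → 0 ≤ φ t)
    (hψ : ∀ t : ℝ, 0 ≤ t → 0 ≤ ψ t)
    (hderiv : ∀ t : ℝ, 0 ≤ t → HasDerivAt φ (φ' t) t)
    (hineq : ∀ t : ℝ, 0 ≤ t →
      φ' t ≤ -2 * μ * φ t - 2 * D * (R ^ ζ - (φ t) ^ (ζ / 2)) * ψ t)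
    (h0 : φ 0 ≤ R ^ 2) :
    ∀ t : ℝ, 0 ≤ t → φ t ≤ Real.exp (-2 * μ * t) * φ 0 ∧ φ t ≤ R ^ 2 := by
  have hlinear : ∀ t, 0 ≤ t → φ t ≤ R ^ 2 → φ' t ≤ -2 * μ * φ t := by
    intro t ht hle
    have hgap := sub_nonneg.2 (rpow_half_le_rpow_of_le_sq (hφpos t ht) hR.le hζ hle)
    have : 0 ≤ 2 * D * (R ^ ζ - φ t ^ (ζ / 2)) * ψ t :=
      mul_nonneg (mul_nonneg (by positivity) hgap) (hψ t ht)
    linarith [hineq t ht]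
  have hball : ∀ t, 0 ≤ t → φ t ≤ R ^ 2 := fun t ht =>
    le_of_hasDerivAt_neg_of_eq hderiv h0 (fun s hs heq => by
      have := hlinear s hs heq.le
      rw [heq] at this
      have : 0 < μ * R ^ 2 := by positivity
      linarith) ht
  intro t ht
  refine ⟨?_, hball t ht⟩
  simpa using le_exp_mul_of_hasDerivAt_le_mul hderiv (fun s hs => hlinear s hs (hball s hs)) ht
end

section
/- Let Ω ⊂ ℝ^d (d ≤ 3) be bounded and let y_r ∈ L^∞(Ω) with ‖y_r‖_∞ ≤ C_r and ‖∇y_r‖_∞ ≤ C_r. Define N_f(v) = f(y_r + v) − f(y_r) with f(s) = 4τ(s³ − s). Then ∇(N_f(v)) = 4τ[(3v² + 6y_r v + 3y_r² − 1)∇v + (3v² + 6y_r v)∇y_r] pointwise, and consequently −∫_Ω ∇(N_f(v))·∇v dx ≤ 4τ‖∇v‖²_{L²} + 12τ C_r ‖v‖²_{L⁴}‖∇v‖_{L²} + 24τ C_r² ‖v‖_{L²}‖∇v‖_{L²}. -/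
/-! Differentiating `f(y_r + v) - f(y_r)` by the chain rule gives the gradient formula. In the
inner product with `∇v`, the coefficient `4τ(3(v + y_r)² - 1)` of `|∇v|²` is at least `-4τ`, and
the cross term `4τ(3v² + 6 y_r v) ⟨∇y_r, ∇v⟩` is bounded pointwise by
`12τ C_r v² |∇v| + 24τ C_r² |v| |∇v|`; integrating and applying Cauchy–Schwarz to the products
`v² · |∇v|` and `|v| · |∇v|` gives the estimate. -/

open MeasureTheory InnerProductSpace
open scoped RealInnerProductSpace

section Gradient

variable {E : Type*} [NormedAddCommGroup E] [InnerProductSpace ℝ E] [CompleteSpace E]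
  {g h : E → ℝ} {g' h' x : E}

theorem HasGradientAt.add (hg : HasGradientAt g g' x) (hh : HasGradientAt h h' x) :
    HasGradientAt (fun y => g y + h y) (g' + h') x := by
  rw [hasGradientAt_iff_hasFDerivAt, map_add]
  exact hg.hasFDerivAt.add hh.hasFDerivAt

theorem HasGradientAt.sub (hg : HasGradientAt g g' x) (hh : HasGradientAt h h' x) :
    HasGradientAt (fun y => g y - h y) (g' - h') x := by
  rw [hasGradientAt_iff_hasFDerivAt, map_sub]
  exact hg.hasFDerivAt.sub hh.hasFDerivAt

theorem HasDerivAt.comp_hasGradientAt {f : ℝ → ℝ} {f' : ℝ} (hf : HasDerivAt f f' (g x))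
    (hg : HasGradientAt g g' x) : HasGradientAt (fun y => f (g y)) (f' • g') x := by
  rw [hasGradientAt_iff_hasFDerivAt, map_smul]
  exact hf.comp_hasFDerivAt x hg.hasFDerivAt

theorem hasGradientAt_comp_add_sub_comp {f f' : ℝ → ℝ} (hf : ∀ s, HasDerivAt f (f' s) s)
    (hg : HasGradientAt g g' x) (hh : HasGradientAt h h' x) :
    HasGradientAt (fun y => f (g y + h y) - f (g y))
      (f' (g x + h x) • (g' + h') - f' (g x) • g') x :=
  ((hf _).comp_hasGradientAt (hg.add hh)).sub ((hf _).comp_hasGradientAt hg)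

theorem measurable_gradient [MeasurableSpace E] [BorelSpace E] (f : E → ℝ) :
    Measurable (gradient f) :=
  (toDual ℝ E).symm.continuous.measurable.comp (measurable_fderiv ℝ f)

end Gradient

theorem neg_inner_le_of_double_well {E : Type*} [NormedAddCommGroup E] [InnerProductSpace ℝ E]
    {τ C a b : ℝ} {u w : E} (hτ : 0 ≤ τ) (hb : |b| ≤ C) (hw : ‖w‖ ≤ C) :
    -⟪(4 * τ * (3 * a ^ 2 + 6 * b * a + 3 * b ^ 2 - 1)) • u
        + (4 * τ * (3 * a ^ 2 + 6 * b * a)) • w, u⟫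
      ≤ 4 * τ * ‖u‖ ^ 2 + 12 * τ * C * (a ^ 2 * ‖u‖) + 24 * τ * C ^ 2 * (|a| * ‖u‖) := by
  rw [inner_add_left, real_inner_smul_left, real_inner_smul_left, real_inner_self_eq_norm_sq]
  -- `3a² + 6ba + 3b² - 1 = 3(a + b)² - 1 ≥ -1`
  have hu : -(4 * τ * (3 * a ^ 2 + 6 * b * a + 3 * b ^ 2 - 1) * ‖u‖ ^ 2) ≤ 4 * τ * ‖u‖ ^ 2 := by
    nlinarith [mul_nonneg (mul_nonneg hτ (sq_nonneg (a + b))) (sq_nonneg ‖u‖)]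
  have hcoef : |3 * a ^ 2 + 6 * b * a| ≤ 3 * a ^ 2 + 6 * C * |a| :=
    calc |3 * a ^ 2 + 6 * b * a| ≤ 3 * a ^ 2 + 6 * |b| * |a| := by
          refine (abs_add_le _ _).trans_eq ?_
          rw [abs_of_nonneg (by positivity), abs_mul, abs_mul,
            abs_of_nonneg (by norm_num : (0 : ℝ) ≤ 6)]
      _ ≤ 3 * a ^ 2 + 6 * C * |a| := by gcongr
  have hC : 0 ≤ C := (abs_nonneg b).trans hb
  have hinner : |⟪w, u⟫| ≤ C * ‖u‖ :=
    (abs_real_inner_le_norm w u).trans (by gcongr)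
  have hcross : -(4 * τ * (3 * a ^ 2 + 6 * b * a) * ⟪w, u⟫)
      ≤ 12 * τ * C * (a ^ 2 * ‖u‖) + 24 * τ * C ^ 2 * (|a| * ‖u‖) :=
    calc _ ≤ 4 * τ * (|3 * a ^ 2 + 6 * b * a| * |⟪w, u⟫|) := by
          rw [← abs_mul, mul_assoc]
          exact (neg_le_abs _).trans (by rw [abs_mul, abs_of_nonneg (by positivity)])
      _ ≤ 4 * τ * ((3 * a ^ 2 + 6 * C * |a|) * (C * ‖u‖)) := by gcongr
      _ = 12 * τ * C * (a ^ 2 * ‖u‖) + 24 * τ * C ^ 2 * (|a| * ‖u‖) := by ring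
  linarith

section Integral

variable {α : Type*} [MeasurableSpace α] {μ : Measure α}

theorem integral_mul_le_L2_mul_L2_of_nonneg {f g : α → ℝ} (hf : 0 ≤ᵐ[μ] f) (hg : 0 ≤ᵐ[μ] g)
    (hf2 : MemLp f 2 μ) (hg2 : MemLp g 2 μ) :
    ∫ x, f x * g x ∂μ
      ≤ (∫ x, f x ^ 2 ∂μ) ^ ((1 : ℝ) / 2) * (∫ x, g x ^ 2 ∂μ) ^ ((1 : ℝ) / 2) := by
  simpa only [Real.rpow_two] using integral_mul_le_Lp_mul_Lq_of_nonneg Real.HolderConjugate.two_two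
    hf hg (by rwa [ENNReal.ofReal_ofNat]) (by rwa [ENNReal.ofReal_ofNat])

theorem integral_le_of_le_sq_add_mul_add_mul {F v g : α → ℝ} {A B C : ℝ}
    (hB : 0 ≤ B) (hC : 0 ≤ C)
    (hg : ∀ x, 0 ≤ g x) (hvm : AEStronglyMeasurable v μ) (hgm : AEStronglyMeasurable g μ)
    (hF : Integrable F μ) (hg2 : Integrable (fun x => g x ^ 2) μ)
    (hv4 : Integrable (fun x => v x ^ 4) μ) (hv2 : Integrable (fun x => v x ^ 2) μ)
    (hFle : ∀ x, F x ≤ A * g x ^ 2 + B * (v x ^ 2 * g x) + C * (|v x| * g x)) :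
    ∫ x, F x ∂μ ≤ A * ∫ x, g x ^ 2 ∂μ
      + B * (∫ x, v x ^ 4 ∂μ) ^ ((1 : ℝ) / 2) * (∫ x, g x ^ 2 ∂μ) ^ ((1 : ℝ) / 2)
      + C * (∫ x, v x ^ 2 ∂μ) ^ ((1 : ℝ) / 2) * (∫ x, g x ^ 2 ∂μ) ^ ((1 : ℝ) / 2) := by
  have hgL2 : MemLp g 2 μ := (memLp_two_iff_integrable_sq hgm).2 hg2
  have hvsqL2 : MemLp (fun x => v x ^ 2) 2 μ :=
    (memLp_two_iff_integrable_sq (hvm.pow 2)).2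
      (by simpa only [Pi.pow_apply, ← pow_mul] using hv4)
  have habsL2 : MemLp (fun x => |v x|) 2 μ :=
    (memLp_two_iff_integrable_sq (continuous_abs.comp_aestronglyMeasurable hvm)).2
      (by simpa only [sq_abs] using hv2)
  have hvsqg : Integrable (fun x => v x ^ 2 * g x) μ := hvsqL2.integrable_mul hgL2
  have habsg : Integrable (fun x => |v x| * g x) μ := habsL2.integrable_mul hgL2
  have hcs₁ := integral_mul_le_L2_mul_L2_of_nonneg (.of_forall fun x => sq_nonneg (v x))
    (.of_forall hg) hvsqL2 hgL2
  have hcs₂ := integral_mul_le_L2_mul_L2_of_nonneg (.of_forall fun x => abs_nonneg (v x))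
    (.of_forall hg) habsL2 hgL2
  simp only [← pow_mul, sq_abs] at hcs₁ hcs₂
  have hAB : Integrable (fun x => A * g x ^ 2 + B * (v x ^ 2 * g x)) μ :=
    (hg2.const_mul A).add (hvsqg.const_mul B)
  calc ∫ x, F x ∂μ
      ≤ ∫ x, A * g x ^ 2 + B * (v x ^ 2 * g x) + C * (|v x| * g x) ∂μ :=
        integral_mono hF (hAB.add (habsg.const_mul C)) hFle
    _ = A * ∫ x, g x ^ 2 ∂μ + B * ∫ x, v x ^ 2 * g x ∂μ + C * ∫ x, |v x| * g x ∂μ := by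
        rw [integral_add hAB (habsg.const_mul C),
          integral_add (hg2.const_mul A) (hvsqg.const_mul B),
          integral_const_mul, integral_const_mul, integral_const_mul]
    _ ≤ _ := by
        rw [mul_assoc B, mul_assoc C]
        gcongr

end Integral

theorem stmt7_general (d : ℕ)
    (Ω : Set (EuclideanSpace ℝ (Fin d)))
    (τ Cr : ℝ) (hτ : 0 < τ) (hCr : 0 ≤ Cr)
    (v yr : EuclideanSpace ℝ (Fin d) → ℝ)
    (hv : Differentiable ℝ v) (hyr : Differentiable ℝ yr)
    (hyrb : ∀ x, |yr x| ≤ Cr) (hgyrb : ∀ x, ‖gradient yr x‖ ≤ Cr)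
    (f : ℝ → ℝ) (hf : ∀ s : ℝ, f s = 4 * τ * (s ^ 3 - s))
    (Nf : EuclideanSpace ℝ (Fin d) → ℝ) (hNf : ∀ x, Nf x = f (yr x + v x) - f (yr x))
    (hint1 : IntegrableOn (fun x => (inner ℝ (gradient Nf x) (gradient v x) : ℝ)) Ω)
    (hint2 : IntegrableOn (fun x => ‖gradient v x‖ ^ 2) Ω)
    (hint3 : IntegrableOn (fun x => (v x) ^ 4) Ω)
    (hint4 : IntegrableOn (fun x => (v x) ^ 2) Ω) :
    (∀ x, gradient Nf x =
        (4 * τ * (3 * (v x) ^ 2 + 6 * yr x * v x + 3 * (yr x) ^ 2 - 1)) • gradient v x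
          + (4 * τ * (3 * (v x) ^ 2 + 6 * yr x * v x)) • gradient yr x) ∧
    (-∫ x in Ω, (inner ℝ (gradient Nf x) (gradient v x) : ℝ))
      ≤ 4 * τ * (∫ x in Ω, ‖gradient v x‖ ^ 2)
        + 12 * τ * Cr * (∫ x in Ω, (v x) ^ 4) ^ ((1 : ℝ) / 2)
            * (∫ x in Ω, ‖gradient v x‖ ^ 2) ^ ((1 : ℝ) / 2)
        + 24 * τ * Cr ^ 2 * (∫ x in Ω, (v x) ^ 2) ^ ((1 : ℝ) / 2)
            * (∫ x in Ω, ‖gradient v x‖ ^ 2) ^ ((1 : ℝ) / 2) := by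
  have hf' : ∀ s, HasDerivAt f (4 * τ * (3 * s ^ 2 - 1)) s := fun s => by
    rw [funext hf]
    exact (((hasDerivAt_pow 3 s).sub (hasDerivAt_id s)).const_mul (4 * τ)).congr_deriv (by ring)
  have hgrad : ∀ x, gradient Nf x =
      (4 * τ * (3 * (v x) ^ 2 + 6 * yr x * v x + 3 * (yr x) ^ 2 - 1)) • gradient v x
        + (4 * τ * (3 * (v x) ^ 2 + 6 * yr x * v x)) • gradient yr x := fun x => by
    rw [funext hNf, (hasGradientAt_comp_add_sub_comp hf' (hyr x).hasGradientAt
      (hv x).hasGradientAt).gradient]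
    module
  refine ⟨hgrad, ?_⟩
  rw [← integral_neg]
  refine integral_le_of_le_sq_add_mul_add_mul (by positivity) (by positivity)
    (fun x => norm_nonneg _) hv.continuous.aestronglyMeasurable
    (measurable_gradient v).norm.aestronglyMeasurable hint1.neg hint2 hint3 hint4 fun x => ?_
  rw [hgrad x]
  exact neg_inner_le_of_double_well hτ.le (hyrb x) (hgyrb x)

theorem stmt7 (d : ℕ) (hd : 1 ≤ d ∧ d ≤ 3)
    (Ω : Set (EuclideanSpace ℝ (Fin d))) (hΩ : MeasurableSet Ω)
    (hΩb : Bornology.IsBounded Ω)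
    (τ Cr : ℝ) (hτ : 0 < τ) (hCr : 0 ≤ Cr)
    (v yr : EuclideanSpace ℝ (Fin d) → ℝ)
    (hv : Differentiable ℝ v) (hyr : Differentiable ℝ yr)
    (hyrb : ∀ x, |yr x| ≤ Cr) (hgyrb : ∀ x, ‖gradient yr x‖ ≤ Cr)
    (f : ℝ → ℝ) (hf : ∀ s : ℝ, f s = 4 * τ * (s ^ 3 - s))
    (Nf : EuclideanSpace ℝ (Fin d) → ℝ) (hNf : ∀ x, Nf x = f (yr x + v x) - f (yr x))
    (hint1 : IntegrableOn (fun x => (inner ℝ (gradient Nf x) (gradient v x) : ℝ)) Ω)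
    (hint2 : IntegrableOn (fun x => ‖gradient v x‖ ^ 2) Ω)
    (hint3 : IntegrableOn (fun x => (v x) ^ 4) Ω)
    (hint4 : IntegrableOn (fun x => (v x) ^ 2) Ω) :
    (∀ x, gradient Nf x =
        (4 * τ * (3 * (v x) ^ 2 + 6 * yr x * v x + 3 * (yr x) ^ 2 - 1)) • gradient v x
          + (4 * τ * (3 * (v x) ^ 2 + 6 * yr x * v x)) • gradient yr x) ∧
    (-∫ x in Ω, (inner ℝ (gradient Nf x) (gradient v x) : ℝ))
      ≤ 4 * τ * (∫ x in Ω, ‖gradient v x‖ ^ 2)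
        + 12 * τ * Cr * (∫ x in Ω, (v x) ^ 4) ^ ((1 : ℝ) / 2)
            * (∫ x in Ω, ‖gradient v x‖ ^ 2) ^ ((1 : ℝ) / 2)
        + 24 * τ * Cr ^ 2 * (∫ x in Ω, (v x) ^ 2) ^ ((1 : ℝ) / 2)
            * (∫ x in Ω, ‖gradient v x‖ ^ 2) ^ ((1 : ℝ) / 2) :=
  stmt7_general d Ω τ Cr hτ hCr v yr hv hyr hyrb hgyrb f hf Nf hNf hint1 hint2 hint3 hint4
end

section
/- Let a₂ ∈ L^∞(Ω), y_r ∈ L^∞(Ω), and let ḡ(w) = a₁w + a₂w(|w| − 1) with a₁, a₂ ≥ 0. Define N_g(d) = ḡ(y_r + d) − ḡ(y_r). Then −∫_Ω N_g(d)·d dx ≤ (‖a₂‖_{L^∞} + ‖a₂ y_r‖_{L^∞})·‖d‖²_{L²} for all d ∈ L²(Ω) (with the integrand interpreted pointwise). -/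
/-! With `ḡ(s) = a₁ s + a₂ s (|s| - 1)`, the increment splits as
`ḡ(y + t) - ḡ(y) = (a₁ - a₂ + a₂ |y + t|) t + a₂ y (|y + t| - |y|)`.
Multiplied by `-t`, the first part is at most `a₂ t²` because `a₁, a₂ ≥ 0`, and the second at most
`|a₂ y| t²` by the reverse triangle inequality. Integrating this pointwise bound gives the estimate. -/

open MeasureTheory

def gbar (a₁ a₂ s : ℝ) : ℝ := a₁ * s + a₂ * s * (|s| - 1)

lemma gbar_add_sub_gbar (a₁ a₂ y t : ℝ) :
    gbar a₁ a₂ (y + t) - gbar a₁ a₂ y =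
      (a₁ - a₂ + a₂ * |y + t|) * t + a₂ * y * (|y + t| - |y|) := by
  unfold gbar; ring

lemma neg_mul_abs_add_sub_abs_mul_le (c y t : ℝ) :
    -(c * (|y + t| - |y|) * t) ≤ |c| * t ^ 2 := by
  have hrev : |(|y + t| - |y|)| ≤ |t| := by
    simpa using abs_abs_sub_abs_le_abs_sub (y + t) y
  calc -(c * (|y + t| - |y|) * t) ≤ |c * (|y + t| - |y|) * t| := neg_le_abs _
    _ = |c| * (|(|y + t| - |y|)| * |t|) := by rw [abs_mul, abs_mul, mul_assoc]
    _ ≤ |c| * (|t| * |t|) := by gcongr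
    _ = |c| * t ^ 2 := by rw [← abs_mul, abs_mul_self, sq]

lemma neg_gbar_increment_mul_le {a₁ a₂ : ℝ} (ha₁ : 0 ≤ a₁) (ha₂ : 0 ≤ a₂) (y t : ℝ) :
    -((gbar a₁ a₂ (y + t) - gbar a₁ a₂ y) * t) ≤ (a₂ + |a₂ * y|) * t ^ 2 := by
  have hlin : -((a₁ - a₂ + a₂ * |y + t|) * t * t) ≤ a₂ * t ^ 2 := by
    nlinarith [mul_nonneg ha₁ (sq_nonneg t), mul_nonneg (mul_nonneg ha₂ (abs_nonneg (y + t)))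
      (sq_nonneg t)]
  have habs := neg_mul_abs_add_sub_abs_mul_le (a₂ * y) y t
  rw [gbar_add_sub_gbar]
  linarith

theorem stmt9_general (d : ℕ) (Ω : Set (EuclideanSpace ℝ (Fin d)))
    (a₁ a₂ yr dfun : EuclideanSpace ℝ (Fin d) → ℝ)
    (Ca Cay : ℝ)
    (ha₁ : ∀ x, 0 ≤ a₁ x) (ha₂ : ∀ x, 0 ≤ a₂ x)
    (hCa : ∀ x, |a₂ x| ≤ Ca) (hCay : ∀ x, |a₂ x * yr x| ≤ Cay)
    (g : EuclideanSpace ℝ (Fin d) → ℝ → ℝ)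
    (hg : ∀ x (s : ℝ), g x s = a₁ x * s + a₂ x * s * (|s| - 1))
    (Ng : EuclideanSpace ℝ (Fin d) → ℝ)
    (hNg : ∀ x, Ng x = g x (yr x + dfun x) - g x (yr x))
    (hint1 : IntegrableOn (fun x => Ng x * dfun x) Ω)
    (hint2 : IntegrableOn (fun x => (dfun x) ^ 2) Ω) :
    (-∫ x in Ω, Ng x * dfun x) ≤ (Ca + Cay) * ∫ x in Ω, (dfun x) ^ 2 := by
  have hpointwise : ∀ x, -(Ng x * dfun x) ≤ (Ca + Cay) * dfun x ^ 2 := fun x => by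
    have hNg_eq : Ng x = gbar (a₁ x) (a₂ x) (yr x + dfun x) - gbar (a₁ x) (a₂ x) (yr x) := by
      rw [hNg, hg, hg, gbar, gbar]
    have hconst : a₂ x + |a₂ x * yr x| ≤ Ca + Cay :=
      add_le_add ((le_abs_self _).trans (hCa x)) (hCay x)
    rw [hNg_eq]
    exact (neg_gbar_increment_mul_le (ha₁ x) (ha₂ x) _ _).trans
      (mul_le_mul_of_nonneg_right hconst (sq_nonneg _))
  calc -∫ x in Ω, Ng x * dfun x = ∫ x in Ω, -(Ng x * dfun x) := (integral_neg _).symm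
    _ ≤ ∫ x in Ω, (Ca + Cay) * dfun x ^ 2 :=
      integral_mono hint1.neg (hint2.const_mul _) hpointwise
    _ = (Ca + Cay) * ∫ x in Ω, dfun x ^ 2 := integral_const_mul _ _

theorem stmt9 (d : ℕ) (Ω : Set (EuclideanSpace ℝ (Fin d))) (hΩ : MeasurableSet Ω)
    (a₁ a₂ yr dfun : EuclideanSpace ℝ (Fin d) → ℝ)
    (Ca Cay : ℝ)
    (ha₁ : ∀ x, 0 ≤ a₁ x) (ha₂ : ∀ x, 0 ≤ a₂ x)
    (hCa : ∀ x, |a₂ x| ≤ Ca) (hCay : ∀ x, |a₂ x * yr x| ≤ Cay)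
    (g : EuclideanSpace ℝ (Fin d) → ℝ → ℝ)
    (hg : ∀ x (s : ℝ), g x s = a₁ x * s + a₂ x * s * (|s| - 1))
    (Ng : EuclideanSpace ℝ (Fin d) → ℝ)
    (hNg : ∀ x, Ng x = g x (yr x + dfun x) - g x (yr x))
    (hint1 : IntegrableOn (fun x => Ng x * dfun x) Ω)
    (hint2 : IntegrableOn (fun x => (dfun x) ^ 2) Ω) :
    (-∫ x in Ω, Ng x * dfun x) ≤ (Ca + Cay) * ∫ x in Ω, (dfun x) ^ 2 :=
  stmt9_general d Ω a₁ a₂ yr dfun Ca Cay ha₁ ha₂ hCa hCay g hg Ng hNg hint1 hint2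
end
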